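/- arXiv:math/0407058 — 4 statements merged into one kernel-verified Lean document; each statement's English description precedes it below -/
import Mathlib

section
/- Let A ⊂ ℝ^k, let φ : A × S^k → ℝ, and let h : A → S^k satisfy φ(x, h(x)) = inf_{v ∈ S^k} φ(x,v) for every x ∈ A. Suppose there are constants c₁ > 0, c₃ > 0 and ϱ ∈ (0,1] such that: (i) |φ(x,v) − φ(y,v)| ≤ c₁ ‖x − y‖^ϱ for all x, y ∈ A and all v ∈ S^k; and (ii) φ(x,v) − φ(x,h(x)) ≥ c₃ ‖v − h(x)‖² for all x ∈ A and v ∈ S^k. Then ‖h(x) − h(y)‖ ≤ (2c₁/c₃)^{1/2} ‖x − y‖^{ϱ/2} for all x, y ∈ A; in particular, h is Hölder continuous on A with exponent ϱ/2. -/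
open Set

noncomputable def l1 {k : ℕ} (x : Fin k → ℝ) : ℝ := ∑ i, |x i|

/-- The standard simplex S^k in ℝ^k. -/
def Sk (k : ℕ) : Set (Fin k → ℝ) := {u | (∀ i, 0 ≤ u i) ∧ ∑ i, u i = 1}

lemma l1_nonneg {k : ℕ} (x : Fin k → ℝ) : 0 ≤ l1 x :=
  Finset.sum_nonneg fun i _ => abs_nonneg _

lemma l1_sub_comm {k : ℕ} (x y : Fin k → ℝ) : l1 (x - y) = l1 (y - x) := by
  unfold l1
  refine Finset.sum_congr rfl fun i _ => ?_
  simp [abs_sub_comm]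

theorem stmt_9 {k : ℕ} (A : Set (Fin k → ℝ)) (φ : (Fin k → ℝ) → (Fin k → ℝ) → ℝ)
    (h : (Fin k → ℝ) → (Fin k → ℝ))
    (hmem : ∀ x ∈ A, h x ∈ Sk k)
    (hargmin : ∀ x ∈ A, φ x (h x) = sInf ((φ x) '' Sk k))
    (c1 c3 ϱ : ℝ) (hc1 : 0 < c1) (hc3 : 0 < c3) (hϱ0 : 0 < ϱ) (hϱ1 : ϱ ≤ 1)
    (hi : ∀ x ∈ A, ∀ y ∈ A, ∀ v ∈ Sk k, |φ x v - φ y v| ≤ c1 * l1 (x - y) ^ ϱ)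
    (hii : ∀ x ∈ A, ∀ v ∈ Sk k, c3 * l1 (v - h x) ^ 2 ≤ φ x v - φ x (h x)) :
    ∀ x ∈ A, ∀ y ∈ A,
      l1 (h x - h y) ≤ (2 * c1 / c3) ^ (1/2 : ℝ) * l1 (x - y) ^ (ϱ / 2) := by
  intro x hx y hy
  set d := l1 (h x - h y) with hd
  set t := l1 (x - y) with ht
  have hd0 : 0 ≤ d := l1_nonneg _
  have ht0 : 0 ≤ t := l1_nonneg _
  have h1 : c3 * d ^ 2 ≤ φ y (h x) - φ y (h y) := hii y hy (h x) (hmem x hx)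
  have h2 : c3 * d ^ 2 ≤ φ x (h y) - φ x (h x) := by
    have := hii x hx (h y) (hmem y hy)
    rwa [l1_sub_comm, ← hd] at this
  have h3 : |φ x (h y) - φ y (h y)| ≤ c1 * t ^ ϱ := hi x hx y hy (h y) (hmem y hy)
  have h4 : |φ y (h x) - φ x (h x)| ≤ c1 * t ^ ϱ := by
    have := hi y hy x hx (h x) (hmem x hx)
    rwa [l1_sub_comm, ← ht] at this
  rw [abs_le] at h3 h4
  have key : d ^ 2 ≤ (2 * c1 / c3) * t ^ ϱ := by
    rw [div_mul_eq_mul_div, le_div_iff₀ hc3]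
    nlinarith [h3.2, h4.2, h1, h2]
  have hpos : (0:ℝ) ≤ 2 * c1 / c3 := by positivity
  calc d = Real.sqrt (d ^ 2) := (Real.sqrt_sq hd0).symm
    _ ≤ Real.sqrt ((2 * c1 / c3) * t ^ ϱ) := Real.sqrt_le_sqrt key
    _ = Real.sqrt (2 * c1 / c3) * Real.sqrt (t ^ ϱ) := Real.sqrt_mul hpos _
    _ = (2 * c1 / c3) ^ (1/2 : ℝ) * t ^ (ϱ / 2) := by
        rw [Real.sqrt_eq_rpow, Real.sqrt_eq_rpow, ← Real.rpow_mul ht0]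
        ring_nf
end

section
/- Let φ : ℝ^k × S^k → ℝ be continuous and suppose that for each fixed x ∈ ℝ^k the map u ↦ φ(x,u) is convex on S^k. Let φ*(x) = min_{u ∈ S^k} φ(x,u). Then for every δ > 0 and every compact set A ⊂ ℝ^k there exists a Lipschitz continuous function h' : ℝ^k → S^k such that φ(x, h'(x)) ≤ φ*(x) + δ for every x ∈ A. -/
open Set

/-!
For each `u ∈ Sk k` the set of points `x` at which `u` is `δ`-optimal, `φ x u < φ* x + δ`, is open
because `φ*` is continuous, and these sets cover `A`. A Lipschitz partition of unity subordinate to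
a finite subcover glues the corresponding constant choices, the mass missing away from `A` being
sent to a fixed point of the simplex. At `x ∈ A` the value is then a convex combination of
`δ`-optimal points, hence `δ`-optimal itself, since `φ x` is convex and so its sublevel sets are.
-/

open Finset Metric NNReal

theorem IsCompact.continuous_sInf_of_continuousOn {α β γ : Type*}
    [ConditionallyCompleteLinearOrder α] [TopologicalSpace α] [OrderTopology α]
    [TopologicalSpace β] [TopologicalSpace γ] {f : γ → β → α} {K : Set β} (hK : IsCompact K)
    (hf : ContinuousOn (fun p : γ × β => f p.1 p.2) (univ ×ˢ K)) :
    Continuous fun x => sInf (f x '' K) := by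
  have : CompactSpace K := isCompact_iff_compactSpace.mp hK
  have hfK : Continuous fun p : γ × K => f p.1 p.2 :=
    hf.comp_continuous (continuous_fst.prodMk (continuous_subtype_val.comp continuous_snd))
      fun p => ⟨trivial, p.2.2⟩
  simpa only [image_univ, ← image_eq_range] using
    isCompact_univ.continuous_sInf (f := fun x (u : K) => f x u) hfK

section Lipschitz

variable {X ι : Type*}

theorem LipschitzWith.finset_sum [PseudoEMetricSpace X] {E : Type*} [SeminormedAddCommGroup E]
    {s : Finset ι} {f : ι → X → E} {K : ι → ℝ≥0} (hf : ∀ i ∈ s, LipschitzWith (K i) (f i)) :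
    LipschitzWith (∑ i ∈ s, K i) fun x => ∑ i ∈ s, f i x := by
  classical
  induction s using Finset.induction_on with
  | empty => simpa using LipschitzWith.const (0 : E)
  | insert i s hi ih =>
    simp only [sum_insert hi]
    exact (hf i (mem_insert_self i s)).add (ih fun j hj => hf j (mem_insert_of_mem hj))

theorem LipschitzWith.smul_const [PseudoMetricSpace X] {E : Type*} [SeminormedAddCommGroup E]
    [NormedSpace ℝ E] {f : X → ℝ} {K : ℝ≥0} (hf : LipschitzWith K f) (v : E) :
    LipschitzWith (K * ‖v‖₊) fun x => f x • v :=
  LipschitzWith.of_dist_le_mul fun x y => by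
    rw [dist_eq_norm, ← sub_smul, norm_smul, ← dist_eq_norm, NNReal.coe_mul, coe_nnnorm,
      mul_right_comm]
    exact mul_le_mul_of_nonneg_right (hf.dist_le_mul x y) (norm_nonneg v)

theorem LipschitzWith.div_of_le [PseudoMetricSpace X] {f g : X → ℝ} {Kf Kg : ℝ≥0} {c : ℝ}
    (hf : LipschitzWith Kf f) (hg : LipschitzWith Kg g) (hc : 0 < c) (hf₀ : ∀ x, 0 ≤ f x)
    (hfg : ∀ x, f x ≤ g x) (hgc : ∀ x, c ≤ g x) :
    LipschitzWith ((Kf + Kg) / c.toNNReal) fun x => f x / g x := by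
  refine LipschitzWith.of_dist_le_mul fun x y => ?_
  have hgx : 0 < g x := hc.trans_le (hgc x)
  have hgy : 0 < g y := hc.trans_le (hgc y)
  have hnum : |f x * g y - g x * f y| ≤ (Kf + Kg) * dist x y * g y :=
    calc |f x * g y - g x * f y| = |(f x - f y) * g y - f y * (g x - g y)| := by ring_nf
      _ ≤ |f x - f y| * g y + f y * |g x - g y| := by
        grw [abs_sub, abs_mul, abs_mul, abs_of_pos hgy, abs_of_nonneg (hf₀ y)]
      _ ≤ Kf * dist x y * g y + g y * (Kg * dist x y) := by
        rw [← Real.dist_eq, ← Real.dist_eq]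
        gcongr
        exacts [hf.dist_le_mul x y, hfg y, hg.dist_le_mul x y]
      _ = (Kf + Kg) * dist x y * g y := by ring
  calc dist (f x / g x) (f y / g y) = |f x * g y - g x * f y| / (g x * g y) := by
        rw [Real.dist_eq, div_sub_div _ _ hgx.ne' hgy.ne', abs_div, abs_of_pos (mul_pos hgx hgy)]
    _ ≤ (Kf + Kg) * dist x y * g y / (g x * g y) := by gcongr
    _ = (Kf + Kg) * dist x y / g x := by field_simp
    _ ≤ (Kf + Kg) * dist x y / c := by gcongr; exact hgc x
    _ = ↑((Kf + Kg) / c.toNNReal) * dist x y := by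
        rw [NNReal.coe_div, Real.coe_toNNReal _ hc.le, NNReal.coe_add]; ring

theorem IsOpen.exists_lipschitzWith_pos_iff_mem [PseudoMetricSpace X] {U : Set X} (hU : IsOpen U) :
    ∃ ψ : X → ℝ, LipschitzWith 1 ψ ∧ (∀ x, 0 ≤ ψ x) ∧ ∀ x, 0 < ψ x ↔ x ∈ U := by
  rcases Uᶜ.eq_empty_or_nonempty with hUc | hUc
  · refine ⟨fun _ => 1, (LipschitzWith.const 1).weaken zero_le_one, fun _ => zero_le_one,
      fun x => ?_⟩
    simp [compl_empty_iff.mp hUc]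
  · refine ⟨fun x => infDist x Uᶜ, lipschitz_infDist_pt _, fun _ => infDist_nonneg, fun x => ?_⟩
    rw [← hU.isClosed_compl.notMem_iff_infDist_pos hUc, mem_compl_iff, not_not]

/-- The weight at `none` makes up the missing mass where `∑ i ∈ t, ψ i < c` and vanishes
elsewhere; dividing by `max (∑ i ∈ t, ψ i) c` rather than by the sum keeps the weights Lipschitz. -/
noncomputable def normalizedWeights (t : Finset ι) (ψ : ι → X → ℝ) (c : ℝ) : Option ι → X → ℝ
  | some i, x => ψ i x / max (∑ i ∈ t, ψ i x) c
  | none, x => 1 - ∑ i ∈ t, ψ i x / max (∑ i ∈ t, ψ i x) c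

variable {t : Finset ι} {ψ : ι → X → ℝ} {c : ℝ}

theorem sum_normalizedWeights (x : X) :
    ∑ j ∈ insertNone t, normalizedWeights t ψ c j x = 1 := by
  simp [sum_insertNone, normalizedWeights]

theorem normalizedWeights_nonneg (hc : 0 < c) (hψ : ∀ i x, 0 ≤ ψ i x) (j : Option ι) (x : X) :
    0 ≤ normalizedWeights t ψ c j x := by
  have hmax : 0 < max (∑ i ∈ t, ψ i x) c := lt_max_of_lt_right hc
  cases j with
  | none =>
    rw [normalizedWeights, sub_nonneg, ← sum_div]
    exact div_le_one_of_le₀ (le_max_left _ _) hmax.le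
  | some i => exact div_nonneg (hψ i x) hmax.le

theorem normalizedWeights_none_eq_zero (hc : 0 < c) {x : X} (hx : c ≤ ∑ i ∈ t, ψ i x) :
    normalizedWeights t ψ c none x = 0 := by
  rw [normalizedWeights, ← sum_div, max_eq_left hx, div_self (hc.trans_le hx).ne', sub_self]

theorem pos_of_normalizedWeights_some_pos (hc : 0 < c) {i : ι} {x : X}
    (h : 0 < normalizedWeights t ψ c (some i) x) : 0 < ψ i x :=
  (div_pos_iff_of_pos_right (lt_max_of_lt_right hc)).1 h

theorem exists_lipschitzWith_normalizedWeights [PseudoMetricSpace X] {K : ℝ≥0} (hc : 0 < c)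
    (hψ₀ : ∀ i x, 0 ≤ ψ i x) (hψ : ∀ i, LipschitzWith K (ψ i)) :
    ∃ K', ∀ j ∈ insertNone t, LipschitzWith K' (normalizedWeights t ψ c j) := by
  have hmax := (LipschitzWith.finset_sum fun i (_ : i ∈ t) => hψ i).max_const c
  have hsome {i : ι} (hi : i ∈ t) := (hψ i).div_of_le hmax hc (hψ₀ i)
    (fun x => (single_le_sum (fun i _ => hψ₀ i x) hi).trans (le_max_left _ _))
    (fun _ => le_max_right _ _)
  have hnone := (LipschitzWith.const 1).sub (LipschitzWith.finset_sum fun i hi => hsome hi)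
  refine ⟨max (0 + ∑ i ∈ t, (K + ∑ i ∈ t, K) / c.toNNReal) ((K + ∑ i ∈ t, K) / c.toNNReal),
    fun j hj => ?_⟩
  cases j with
  | none => exact hnone.weaken (le_max_left _ _)
  | some i => exact (hsome (mem_insertNone.1 hj i rfl)).weaken (le_max_right _ _)

theorem exists_lipschitzWith_forall_mem_convexHull [PseudoMetricSpace X] {E : Type*}
    [NormedAddCommGroup E] [NormedSpace ℝ E] {A : Set X} (hA : IsCompact A) {s : Set E}
    (hs : Convex ℝ s) (hs₀ : s.Nonempty) {U : E → Set X} (hU : ∀ v ∈ s, IsOpen (U v))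
    (hAU : A ⊆ ⋃ v ∈ s, U v) :
    ∃ (K : ℝ≥0) (h : X → E), LipschitzWith K h ∧ (∀ x, h x ∈ s) ∧
      ∀ x ∈ A, h x ∈ convexHull ℝ {v ∈ s | x ∈ U v} := by
  classical
  obtain ⟨v₀, hv₀⟩ := hs₀
  choose ψ hψ hψ₀ hψU using fun v : s => (hU v v.2).exists_lipschitzWith_pos_iff_mem
  obtain ⟨t, ht⟩ := hA.elim_finite_subcover (fun v : s => U v) (fun v => hU v v.2)
    (by simpa only [biUnion_eq_iUnion] using hAU)
  obtain ⟨c, hc, hcA⟩ := hA.exists_forall_le' (a := 0)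
    (LipschitzWith.finset_sum fun v (_ : v ∈ t) => hψ v).continuous.continuousOn
    fun x hx => by
      obtain ⟨v, hvt, hxv⟩ := mem_iUnion₂.1 (ht hx)
      exact sum_pos' (fun v _ => hψ₀ v x) ⟨v, hvt, (hψU v x).2 hxv⟩
  have hw₀ : ∀ j x, 0 ≤ normalizedWeights t ψ c j x := normalizedWeights_nonneg hc hψ₀
  let p : Option s → E := fun j => j.elim v₀ Subtype.val
  obtain ⟨K, hK⟩ := exists_lipschitzWith_normalizedWeights (t := t) hc hψ₀ hψ
  refine ⟨_, fun x => ∑ j ∈ insertNone t, normalizedWeights t ψ c j x • p j,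
    LipschitzWith.finset_sum fun j hj => (hK j hj).smul_const (p j),
    fun x => hs.sum_mem (fun j _ => hw₀ j x) (sum_normalizedWeights x) ?_, fun x hx => ?_⟩
  · rintro (_ | v) _
    exacts [hv₀, v.2]
  dsimp only
  rw [← centerMass_eq_of_sum_1 _ _ (sum_normalizedWeights x), ← centerMass_filter_ne_zero]
  refine centerMass_mem_convexHull _ (fun j _ => hw₀ j x)
    (by rw [sum_filter_ne_zero, sum_normalizedWeights]; exact one_pos) ?_
  rintro (_ | v) hj
  · exact absurd (normalizedWeights_none_eq_zero hc (hcA x hx)) (mem_filter.1 hj).2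
  · exact ⟨v.2, (hψU v x).1 (pos_of_normalizedWeights_some_pos hc
      ((hw₀ _ x).lt_of_ne' (mem_filter.1 hj).2))⟩

end Lipschitz

theorem norm_le_l1 {k : ℕ} (v : Fin k → ℝ) : ‖v‖ ≤ l1 v :=
  (pi_norm_le_iff_of_nonneg (sum_nonneg fun _ _ => abs_nonneg _)).2 fun i =>
    single_le_sum (f := fun j => |v j|) (fun _ _ => abs_nonneg _) (mem_univ i)

theorem l1_le_mul_norm {k : ℕ} (v : Fin k → ℝ) : l1 v ≤ k * ‖v‖ :=
  calc l1 v = ∑ i, ‖v i‖ := rfl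
    _ ≤ ∑ _i : Fin k, ‖v‖ := sum_le_sum fun i _ => norm_le_pi_norm v i
    _ = k * ‖v‖ := by simp

theorem LipschitzWith.l1_sub_le {k m : ℕ} {K : ℝ≥0} {f : (Fin m → ℝ) → Fin k → ℝ}
    (hf : LipschitzWith K f) (x y : Fin m → ℝ) :
    l1 (f x - f y) ≤ k * K * l1 (x - y) :=
  calc l1 (f x - f y) ≤ k * ‖f x - f y‖ := l1_le_mul_norm _
    _ ≤ k * (K * ‖x - y‖) := by
      rw [← dist_eq_norm, ← dist_eq_norm]; gcongr; exact hf.dist_le_mul x y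
    _ ≤ k * K * l1 (x - y) := by rw [← mul_assoc]; gcongr; exact norm_le_l1 _

theorem stmt_10 {k : ℕ} (hk : 1 ≤ k) (φ : (Fin k → ℝ) → (Fin k → ℝ) → ℝ)
    (hφ : ContinuousOn (fun p : (Fin k → ℝ) × (Fin k → ℝ) => φ p.1 p.2)
      (Set.univ ×ˢ Sk k))
    (hconv : ∀ x, ConvexOn ℝ (Sk k) (φ x))
    (δ : ℝ) (hδ : 0 < δ) (A : Set (Fin k → ℝ)) (hA : IsCompact A) :
    ∃ h' : (Fin k → ℝ) → (Fin k → ℝ),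
      (∃ c : ℝ, ∀ x y, l1 (h' x - h' y) ≤ c * l1 (x - y)) ∧
      (∀ x, h' x ∈ Sk k) ∧
      ∀ x ∈ A, φ x (h' x) ≤ sInf ((φ x) '' Sk k) + δ := by
  have hS : IsCompact (Sk k) := isCompact_stdSimplex ℝ (Fin k)
  have hS₀ : (Sk k).Nonempty := ⟨_, single_mem_stdSimplex ℝ (⟨0, hk⟩ : Fin k)⟩
  set φmin := fun x => sInf (φ x '' Sk k)
  have hφmin : Continuous φmin := hS.continuous_sInf_of_continuousOn hφ
  have hmin (x) : ∃ v ∈ Sk k, φ x v = φmin x :=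
    (hS.image_of_continuousOn (hφ.comp (continuousOn_const.prodMk continuousOn_id)
      fun v hv => ⟨trivial, hv⟩)).sInf_mem (hS₀.image _)
  obtain ⟨K, h, hK, hhS, hhA⟩ := exists_lipschitzWith_forall_mem_convexHull hA
    (convex_stdSimplex ℝ (Fin k)) hS₀ (U := fun v => {x | φ x v < φmin x + δ})
    (fun v hv => isOpen_lt (hφ.comp_continuous (continuous_id.prodMk continuous_const)
      fun _ => ⟨trivial, hv⟩) (hφmin.add continuous_const))
    fun x _ => by
      obtain ⟨v, hv, hxv⟩ := hmin x
      exact mem_biUnion hv (by simpa [hxv] using hδ)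
  refine ⟨h, ⟨_, hK.l1_sub_le⟩, hhS, fun x hx => ?_⟩
  exact (convexHull_min (fun v hv => And.imp_right le_of_lt hv) ((hconv x).convex_le _)
    (hhA x hx)).2
end

section
/- Let μ ≥ θ ≥ 0, ℓ ∈ ℝ, x ∈ ℝ, and let w : [0,∞) → ℝ be continuous with w(0) = 0. Let X : [0,∞) → ℝ be continuous and Ψ : [0,∞) → ℝ be locally integrable with Ψ(t) ≤ X(t) for all t ≥ 0, and suppose X(t) = x + w(t) + ∫₀ᵗ [ −θX(s) − (μ−θ)Ψ(s) + ℓ ] ds for all t ≥ 0. Let Υ be the unique continuous solution of Υ(t) = x + w(t) + ∫₀ᵗ (−μΥ(s) + ℓ) ds. Then X(t) ≥ Υ(t) for all t ≥ 0. Symmetrically, if instead θ ≥ μ ≥ 0 (with the same hypotheses), then X(t) ≤ Υ(t) for all t ≥ 0. -/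
/-!
Both halves follow from one comparison principle for `D = X - Υ` (resp. `Υ - X`): `D(0) = 0` and
`D(t) = ∫₀ᵗ f` with `f ≥ -μ D`, since here `f + μ D = ±(μ - θ)(X - Ψ)`. If `D(t₀) < 0`, let `s` be
the last point of `[0, t₀]` where `D ≥ 0`; on `(s, t₀]` we have `D < 0`, hence `f ≥ -μ D > 0`, so
`D(t₀) = D(s) + ∫ₛ^{t₀} f ≥ 0`, a contradiction.
-/

open Set MeasureTheory intervalIntegral

lemma ContinuousOn.intervalIntegrable_of_Ici {u : ℝ → ℝ} (hu : ContinuousOn u (Ici 0)) {t : ℝ}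
    (ht : 0 ≤ t) : IntervalIntegrable u volume 0 t :=
  (hu.mono Icc_subset_Ici_self).intervalIntegrable_of_Icc ht

lemma exists_last_nonneg {D : ℝ → ℝ} {t₀ : ℝ} (ht₀ : 0 ≤ t₀) (hD : ContinuousOn D (Icc 0 t₀))
    (hD0 : 0 ≤ D 0) (hDt₀ : D t₀ < 0) :
    ∃ s ∈ Ico 0 t₀, 0 ≤ D s ∧ ∀ u ∈ Ioc s t₀, D u < 0 := by
  have hclosed : IsClosed (Icc 0 t₀ ∩ D ⁻¹' Ici 0) :=
    hD.preimage_isClosed_of_isClosed isClosed_Icc isClosed_Ici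
  obtain ⟨s, ⟨hs, hDs⟩, hmax⟩ :=
    (isCompact_Icc.of_isClosed_subset hclosed inter_subset_left).exists_isGreatest
      ⟨0, ⟨le_rfl, ht₀⟩, hD0⟩
  have hst₀ : s ≠ t₀ := by rintro rfl; exact (not_le.2 hDt₀) hDs
  refine ⟨s, ⟨hs.1, lt_of_le_of_ne hs.2 hst₀⟩, hDs, fun u hu => not_le.1 fun hDu => ?_⟩
  exact not_le.2 hu.1 (hmax ⟨⟨hs.1.trans hu.1.le, hu.2⟩, hDu⟩)

theorem nonneg_of_eq_integral_of_neg_mul_le {μ : ℝ} (hμ : 0 ≤ μ) {D f : ℝ → ℝ}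
    (hD : ContinuousOn D (Ici 0)) (hf : ∀ t ≥ (0:ℝ), IntervalIntegrable f volume 0 t)
    (hfD : ∀ s ≥ (0:ℝ), -μ * D s ≤ f s) (hDf : ∀ t ≥ (0:ℝ), D t = ∫ s in (0:ℝ)..t, f s) :
    ∀ t ≥ (0:ℝ), 0 ≤ D t := by
  intro t₀ ht₀
  by_contra! hDt₀
  have hD0 : D 0 = 0 := by simpa using hDf 0 le_rfl
  obtain ⟨s, ⟨hs0, hst₀⟩, hDs, hneg⟩ :=
    exists_last_nonneg ht₀ (hD.mono Icc_subset_Ici_self) hD0.ge hDt₀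
  have hincr : D t₀ - D s = ∫ u in s..t₀, f u := by
    rw [hDf t₀ ht₀, hDf s hs0]
    exact integral_interval_sub_left (hf t₀ ht₀) (hf s hs0)
  have hpos : 0 ≤ ∫ u in s..t₀, f u := by
    rw [integral_of_le hst₀.le]
    exact setIntegral_nonneg measurableSet_Ioc fun u hu =>
      (mul_nonneg_of_nonpos_of_nonpos (neg_nonpos.2 hμ) (hneg u hu).le).trans
        (hfD u (hs0.trans hu.1.le))
  linarith

theorem stmt_15_general (μ θ ℓ x : ℝ) (hμ : 0 ≤ μ)
    (w : ℝ → ℝ)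
    (X Ψ : ℝ → ℝ) (hX : ContinuousOn X (Ici 0))
    (hΨint : ∀ t : ℝ, IntervalIntegrable Ψ volume 0 t)
    (hΨle : ∀ t ≥ (0:ℝ), Ψ t ≤ X t)
    (hXeq : ∀ t ≥ (0:ℝ), X t = x + w t + ∫ s in (0:ℝ)..t, (-θ * X s - (μ - θ) * Ψ s + ℓ))
    (Υ : ℝ → ℝ) (hΥ : ContinuousOn Υ (Ici 0))
    (hΥeq : ∀ t ≥ (0:ℝ), Υ t = x + w t + ∫ s in (0:ℝ)..t, (-μ * Υ s + ℓ)) :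
    (θ ≤ μ → ∀ t ≥ (0:ℝ), Υ t ≤ X t) ∧ (μ ≤ θ → ∀ t ≥ (0:ℝ), X t ≤ Υ t) := by
  set f : ℝ → ℝ := fun s => (μ - θ) * (X s - Ψ s) - μ * (X s - Υ s)
  have hf : ∀ t ≥ (0:ℝ), IntervalIntegrable f volume 0 t := fun t ht =>
    (((hX.intervalIntegrable_of_Ici ht).sub (hΨint t)).const_mul _).sub
      (((hX.sub hΥ).intervalIntegrable_of_Ici ht).const_mul _)
  have hDf : ∀ t ≥ (0:ℝ), X t - Υ t = ∫ s in (0:ℝ)..t, f s := by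
    intro t ht
    have hXi := hX.intervalIntegrable_of_Ici ht
    have hΥi := hΥ.intervalIntegrable_of_Ici ht
    rw [hXeq t ht, hΥeq t ht, add_sub_add_left_eq_sub, ← integral_sub
      (((hXi.const_mul _).sub ((hΨint t).const_mul _)).add intervalIntegrable_const)
      ((hΥi.const_mul _).add intervalIntegrable_const)]
    exact integral_congr fun s _ => by ring
  constructor
  · intro hθμ t ht
    refine sub_nonneg.1 (nonneg_of_eq_integral_of_neg_mul_le (D := fun s => X s - Υ s) hμ
      (hX.sub hΥ) hf (fun s hs => ?_) hDf t ht)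
    have := mul_nonneg (sub_nonneg.2 hθμ) (sub_nonneg.2 (hΨle s hs))
    simp only [f]
    linarith
  · intro hμθ t ht
    refine sub_nonneg.1 (nonneg_of_eq_integral_of_neg_mul_le (D := fun s => Υ s - X s)
      (f := fun s => -f s) hμ (hΥ.sub hX) (fun t ht => (hf t ht).neg) (fun s hs => ?_)
      (fun t ht => ?_) t ht)
    · have := mul_nonneg (sub_nonneg.2 hμθ) (sub_nonneg.2 (hΨle s hs))
      simp only [f]
      linarith
    · rw [intervalIntegral.integral_neg, ← hDf t ht, neg_sub]

theorem stmt_15 (μ θ ℓ x : ℝ) (hμ : 0 ≤ μ) (hθ : 0 ≤ θ)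
    (w : ℝ → ℝ) (hw : ContinuousOn w (Ici 0)) (hw0 : w 0 = 0)
    (X Ψ : ℝ → ℝ) (hX : ContinuousOn X (Ici 0))
    (hΨint : ∀ t : ℝ, IntervalIntegrable Ψ volume 0 t)
    (hΨle : ∀ t ≥ (0:ℝ), Ψ t ≤ X t)
    (hXeq : ∀ t ≥ (0:ℝ), X t = x + w t + ∫ s in (0:ℝ)..t, (-θ * X s - (μ - θ) * Ψ s + ℓ))
    (Υ : ℝ → ℝ) (hΥ : ContinuousOn Υ (Ici 0))
    (hΥeq : ∀ t ≥ (0:ℝ), Υ t = x + w t + ∫ s in (0:ℝ)..t, (-μ * Υ s + ℓ)) :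
    (θ ≤ μ → ∀ t ≥ (0:ℝ), Υ t ≤ X t) ∧ (μ ≤ θ → ∀ t ≥ (0:ℝ), X t ≤ Υ t) :=
  stmt_15_general μ θ ℓ x hμ w X Ψ hX hΨint hΨle hXeq Υ hΥ hΥeq
end

section
/- Let k ≥ 1, ℓ ∈ ℝ^k, μ_i > 0 and θ_i ≥ 0 for i = 1,…,k, x ∈ ℝ^k, and let w : [0,∞) → ℝ^k be continuous with w(0) = 0. Let X : [0,∞) → ℝ^k be continuous and Ψ : [0,∞) → ℝ^k be locally integrable with Ψ_i(t) ≤ X_i(t) for all i and t, and Σ_i Ψ_i(t) = min(0, Σ_i X_i(t)) for all t, and suppose X_i(t) = x_i + w_i(t) + ∫₀ᵗ [ −θ_i X_i(s) − (μ_i − θ_i) Ψ_i(s) + ℓ_i ] ds for all i and t. Then there is a constant c > 0, depending only on k, μ, θ and ℓ (not on x, w or t), such that ‖X(t)‖ ≤ c [ 1 + t² + ‖x‖ + ‖w(t)‖ + ∫₀ᵗ ‖w(s)‖ ds + ∫₀ᵗ ∫₀ˢ ‖w(r)‖ dr ds ] for all t ≥ 0. -/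
/-
Each coordinate solves a linear Volterra equation `X = g - μ ∫ X` with
`g = x + w + ℓ s + (μ - θ) Φ`, where `Φ = ∫ (X - Ψ)` is nondecreasing because `Ψ ≤ X`.
Variation of constants gives `X = A + (μ - θ) η`, where `A` is the linear comparison process
driven by `x + ℓ s + w` and `η`, the response to `Φ`, is nonnegative and satisfies
`μ ∫₀ᵗ η = Φ(t) - η(t)`. Work conservation says `∑ (X - Ψ) = (∑ X)⁺`, and with `θ ≥ 0` this is
at most `∑ |A| + ∑ μ η`; integrating over `[0, t]` and using the identity for `η` gives
`∑ η(t) ≤ ∫₀ᵗ ∑ |A|`. Hence `‖X(t)‖ ≤ ∑ |A(t)| + D ∫₀ᵗ ∑ |A|` with `D = ∑ |μ - θ|`, and `A` is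
bounded explicitly by `|x|`, `|ℓ| t`, `|w|` and `∫ |w|`.
-/

open Set MeasureTheory

open Real intervalIntegral

lemma hasDerivAt_integral_of_continuousOn_Icc {f : ℝ → ℝ} {a b s : ℝ}
    (hf : ContinuousOn f (Icc a b)) (hs : s ∈ Ioo a b) :
    HasDerivAt (fun u => ∫ r in a..u, f r) (f s) s :=
  integral_hasDerivAt_right
    ((hf.mono (Icc_subset_Icc_right hs.2.le)).intervalIntegrable_of_Icc hs.1.le)
    ((hf.mono Ioo_subset_Icc_self).stronglyMeasurableAtFilter isOpen_Ioo s hs)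
    (hf.continuousAt (Icc_mem_nhds hs.1 hs.2))

lemma continuousOn_primitive_Icc_zero {f : ℝ → ℝ} {t : ℝ} (hf : IntervalIntegrable f volume 0 t)
    (ht : 0 ≤ t) : ContinuousOn (fun s => ∫ r in (0:ℝ)..s, f r) (Icc 0 t) := by
  simpa [uIcc_of_le ht] using continuousOn_primitive_interval' hf left_mem_uIcc

lemma primitive_mono_of_nonneg {f : ℝ → ℝ} {r s : ℝ} (hf : IntervalIntegrable f volume 0 s)
    (hnn : ∀ u ∈ Icc 0 s, 0 ≤ f u) (hr : r ∈ Icc 0 s) :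
    ∫ u in (0:ℝ)..r, f u ≤ ∫ u in (0:ℝ)..s, f u :=
  integral_mono_interval le_rfl hr.1 hr.2
    ((ae_restrict_iff' measurableSet_Ioc).2
      (Filter.Eventually.of_forall fun u hu => hnn u (Ioc_subset_Icc_self hu))) hf

noncomputable def expConv (μ : ℝ) (f : ℝ → ℝ) (t : ℝ) : ℝ :=
  exp (-(μ * t)) * ∫ s in (0:ℝ)..t, exp (μ * s) * f s

/-- The solution `F` of `F t = f t - μ * ∫₀ᵗ F` (see `eq_linearSolution_of_eq_sub_integral`). -/
noncomputable def linearSolution (μ : ℝ) (f : ℝ → ℝ) (t : ℝ) : ℝ :=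
  f t - μ * expConv μ f t

section

variable {μ t : ℝ} {f g : ℝ → ℝ}

lemma intervalIntegrable_exp_mul (hf : ContinuousOn f (Icc 0 t)) (ht : 0 ≤ t) :
    IntervalIntegrable (fun s => exp (μ * s) * f s) volume 0 t :=
  ((by fun_prop : Continuous fun s => exp (μ * s)).continuousOn.mul hf).intervalIntegrable_of_Icc ht

lemma continuousOn_expConv (hf : ContinuousOn f (Icc 0 t)) (ht : 0 ≤ t) :
    ContinuousOn (expConv μ f) (Icc 0 t) :=
  (by fun_prop : Continuous fun s => exp (-(μ * s))).continuousOn.mul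
    (continuousOn_primitive_Icc_zero (intervalIntegrable_exp_mul hf ht) ht)

lemma continuousOn_linearSolution (hf : ContinuousOn f (Icc 0 t)) (ht : 0 ≤ t) :
    ContinuousOn (linearSolution μ f) (Icc 0 t) :=
  hf.sub (continuousOn_const.mul (continuousOn_expConv hf ht))

lemma hasDerivAt_expConv (hf : ContinuousOn f (Icc 0 t)) {s : ℝ} (hs : s ∈ Ioo 0 t) :
    HasDerivAt (expConv μ f) (linearSolution μ f s) s := by
  have hP : HasDerivAt (fun u => ∫ r in (0:ℝ)..u, exp (μ * r) * f r) (exp (μ * s) * f s) s :=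
    hasDerivAt_integral_of_continuousOn_Icc
      ((by fun_prop : Continuous fun s => exp (μ * s)).continuousOn.mul hf) hs
  have hE : HasDerivAt (fun u => exp (-(μ * u))) (exp (-(μ * s)) * -μ) s := by
    simpa using ((hasDerivAt_id s).const_mul μ).neg.exp
  refine (hE.mul hP).congr_deriv ?_
  have h1 : exp (-(μ * s)) * exp (μ * s) = 1 := by rw [← exp_add]; simp
  simp only [linearSolution, expConv]
  linear_combination f s * h1

lemma integral_linearSolution (hf : ContinuousOn f (Icc 0 t)) (ht : 0 ≤ t) :
    ∫ s in (0:ℝ)..t, linearSolution μ f s = expConv μ f t := by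
  rw [integral_eq_sub_of_hasDerivAt_of_le ht (continuousOn_expConv hf ht)
    (fun s hs => hasDerivAt_expConv hf hs)
    ((continuousOn_linearSolution hf ht).intervalIntegrable_of_Icc ht)]
  simp [expConv]

lemma mul_integral_linearSolution (hf : ContinuousOn f (Icc 0 t)) (ht : 0 ≤ t) :
    μ * ∫ s in (0:ℝ)..t, linearSolution μ f s = f t - linearSolution μ f t := by
  rw [integral_linearSolution hf ht, linearSolution]
  ring

lemma eq_linearSolution_of_eq_sub_integral {F : ℝ → ℝ} (hF : ContinuousOn F (Icc 0 t))
    (hg : ContinuousOn g (Icc 0 t)) (ht : 0 ≤ t)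
    (heq : ∀ s ∈ Icc 0 t, F s = g s - μ * ∫ r in (0:ℝ)..s, F r) :
    F t = linearSolution μ g t := by
  have hderiv : ∀ s ∈ Ioo 0 t, HasDerivAt (fun u => exp (μ * u) * ∫ r in (0:ℝ)..u, F r)
      (exp (μ * s) * g s) s := by
    intro s hs
    have hE : HasDerivAt (fun u => exp (μ * u)) (exp (μ * s) * μ) s := by
      simpa using ((hasDerivAt_id s).const_mul μ).exp
    refine (hE.mul (hasDerivAt_integral_of_continuousOn_Icc hF hs)).congr_deriv ?_
    rw [heq s (Ioo_subset_Icc_self hs)]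
    ring
  have hcont : ContinuousOn (fun u => exp (μ * u) * ∫ r in (0:ℝ)..u, F r) (Icc 0 t) :=
    (by fun_prop : Continuous fun s => exp (μ * s)).continuousOn.mul
      (continuousOn_primitive_Icc_zero (hF.intervalIntegrable_of_Icc ht) ht)
  have hI : ∫ r in (0:ℝ)..t, F r = expConv μ g t := by
    rw [expConv, integral_eq_sub_of_hasDerivAt_of_le ht hcont hderiv
      (intervalIntegrable_exp_mul hg ht)]
    simp [← mul_assoc, ← exp_add]
  rw [heq t ⟨ht, le_rfl⟩, hI, linearSolution]

lemma expConv_add (hf : ContinuousOn f (Icc 0 t)) (hg : ContinuousOn g (Icc 0 t)) (ht : 0 ≤ t) :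
    expConv μ (fun s => f s + g s) t = expConv μ f t + expConv μ g t := by
  simp only [expConv, mul_add]
  rw [integral_add (intervalIntegrable_exp_mul hf ht) (intervalIntegrable_exp_mul hg ht), mul_add]

lemma expConv_const_mul (c : ℝ) : expConv μ (fun s => c * f s) t = c * expConv μ f t := by
  simp only [expConv, mul_left_comm _ c, intervalIntegral.integral_const_mul]

lemma linearSolution_add (hf : ContinuousOn f (Icc 0 t)) (hg : ContinuousOn g (Icc 0 t))
    (ht : 0 ≤ t) :
    linearSolution μ (fun s => f s + g s) t = linearSolution μ f t + linearSolution μ g t := by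
  simp only [linearSolution, expConv_add hf hg ht]
  ring

lemma linearSolution_const_mul (c : ℝ) :
    linearSolution μ (fun s => c * f s) t = c * linearSolution μ f t := by
  simp only [linearSolution, expConv_const_mul]
  ring

lemma linearSolution_const (c : ℝ) : linearSolution μ (fun _ => c) t = c * exp (-(μ * t)) := by
  have hexp : ∫ s in (0:ℝ)..t, μ * exp (μ * s) = exp (μ * t) - 1 := by
    rw [integral_deriv_eq_sub' (fun s => exp (μ * s))]
    · simp
    · ext s; simpa [mul_comm] using (((hasDerivAt_id s).const_mul μ).exp).deriv
    · exact fun s _ => by fun_prop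
    · exact by fun_prop
  have h1 : exp (-(μ * t)) * exp (μ * t) = 1 := by rw [← exp_add]; simp
  rw [intervalIntegral.integral_const_mul] at hexp
  simp only [linearSolution, expConv, intervalIntegral.integral_mul_const]
  linear_combination (-(c * exp (-(μ * t)))) * hexp - c * h1

lemma expConv_mono (hf : ContinuousOn f (Icc 0 t)) (hg : ContinuousOn g (Icc 0 t)) (ht : 0 ≤ t)
    (hfg : ∀ s ∈ Icc 0 t, f s ≤ g s) : expConv μ f t ≤ expConv μ g t :=
  mul_le_mul_of_nonneg_left (integral_mono_on ht (intervalIntegrable_exp_mul hf ht)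
    (intervalIntegrable_exp_mul hg ht)
    fun s hs => mul_le_mul_of_nonneg_left (hfg s hs) (exp_pos _).le) (exp_pos _).le

lemma linearSolution_nonneg (hμ : 0 ≤ μ) (hf : ContinuousOn f (Icc 0 t)) (ht : 0 ≤ t)
    (hle : ∀ s ∈ Icc 0 t, f s ≤ f t) (hft : 0 ≤ f t) : 0 ≤ linearSolution μ f t := by
  have h := mul_le_mul_of_nonneg_left (expConv_mono (μ := μ) hf continuousOn_const ht hle) hμ
  have hc := linearSolution_const (μ := μ) (t := t) (f t)
  simp only [linearSolution] at hc ⊢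
  nlinarith [exp_pos (-(μ * t))]

lemma linearSolution_le_self (hμ : 0 ≤ μ) (ht : 0 ≤ t) (hf : ∀ s ∈ Icc 0 t, 0 ≤ f s) :
    linearSolution μ f t ≤ f t := by
  have : 0 ≤ expConv μ f t := mul_nonneg (exp_pos _).le
    (integral_nonneg ht fun s hs => mul_nonneg (exp_pos _).le (hf s hs))
  simp only [linearSolution]
  nlinarith

lemma linearSolution_affine (a b : ℝ) (ht : 0 ≤ t) :
    linearSolution μ (fun s => a + b * s) t =
      a * exp (-(μ * t)) + b * linearSolution μ (fun s => s) t := by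
  rw [linearSolution_add (f := fun _ => a) (g := fun s => b * s) continuousOn_const
    (continuousOn_const.mul continuousOn_id) ht, linearSolution_const,
    linearSolution_const_mul (f := fun s => s)]

lemma abs_linearSolution_affine_le (hμ : 0 ≤ μ) (a b : ℝ) (ht : 0 ≤ t) :
    |linearSolution μ (fun s => a + b * s) t| ≤ linearSolution μ (fun s => |a| + |b| * s) t := by
  have hid : 0 ≤ linearSolution μ (fun s => s) t :=
    linearSolution_nonneg hμ continuousOn_id ht (fun s hs => hs.2) ht
  rw [linearSolution_affine a b ht, linearSolution_affine _ _ ht]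
  refine (abs_add_le _ _).trans ?_
  rw [abs_mul, abs_mul, abs_of_pos (exp_pos _), abs_of_nonneg hid]

lemma abs_linearSolution_le (hμ : 0 ≤ μ) (hf : ContinuousOn f (Icc 0 t)) (ht : 0 ≤ t) :
    |linearSolution μ f t| ≤ |f t| + μ * ∫ s in (0:ℝ)..t, |f s| := by
  have hconv : expConv μ f t = ∫ s in (0:ℝ)..t, exp (μ * (s - t)) * f s := by
    rw [expConv, ← intervalIntegral.integral_const_mul]
    simp only [← mul_assoc, ← exp_add]
    ring_nf
  have hbound : |expConv μ f t| ≤ ∫ s in (0:ℝ)..t, |f s| := by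
    rw [hconv]
    refine (abs_integral_le_integral_abs ht).trans (integral_mono_on ht ?_ ?_ fun s hs => ?_)
    · exact (((by fun_prop : Continuous fun s => exp (μ * (s - t))).continuousOn.mul
        hf).abs).intervalIntegrable_of_Icc ht
    · exact hf.abs.intervalIntegrable_of_Icc ht
    · rw [abs_mul, abs_of_pos (exp_pos _)]
      exact mul_le_of_le_one_left (abs_nonneg _)
        (exp_le_one_iff.2 (mul_nonpos_of_nonneg_of_nonpos hμ (by linarith [hs.2])))
  calc |linearSolution μ f t| ≤ |f t| + |μ * expConv μ f t| := abs_sub _ _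
    _ ≤ |f t| + μ * ∫ s in (0:ℝ)..t, |f s| := by
      rw [abs_mul, abs_of_nonneg hμ]
      gcongr

end

lemma eq_linearSolution_of_integral_equation {μ θ x ℓ t : ℝ} {w X Ψ : ℝ → ℝ}
    (hX : ContinuousOn X (Icc 0 t)) (hw : ContinuousOn w (Icc 0 t))
    (hΨ : IntervalIntegrable Ψ volume 0 t) (ht : 0 ≤ t)
    (heq : ∀ s ∈ Icc 0 t,
      X s = x + w s + ∫ r in (0:ℝ)..s, (-θ * X r - (μ - θ) * Ψ r + ℓ)) :
    X t = linearSolution μ (fun s => x + ℓ * s) t + linearSolution μ w t +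
      (μ - θ) * linearSolution μ (fun s => ∫ r in (0:ℝ)..s, (X r - Ψ r)) t := by
  have hXΨ : IntervalIntegrable (fun r => X r - Ψ r) volume 0 t :=
    (hX.intervalIntegrable_of_Icc ht).sub hΨ
  have hΦ := continuousOn_primitive_Icc_zero hXΨ ht
  have hsol : ∀ s ∈ Icc 0 t, X s = (x + ℓ * s + w s + (μ - θ) * ∫ r in (0:ℝ)..s, (X r - Ψ r)) -
      μ * ∫ r in (0:ℝ)..s, X r := by
    intro s hs
    have hsub : Icc 0 s ⊆ Icc 0 t := Icc_subset_Icc_right hs.2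
    have hXs := (hX.mono hsub).intervalIntegrable_of_Icc (μ := volume) hs.1
    have hXΨs := ((hX.mono hsub).intervalIntegrable_of_Icc hs.1).sub
      (hΨ.mono_set (uIcc_subset_uIcc_left (by simpa [uIcc_of_le ht] using hs)))
    have hintegrand : (fun r => -θ * X r - (μ - θ) * Ψ r + ℓ) =
        fun r => ((μ - θ) * (X r - Ψ r) - μ * X r) + ℓ := by
      ext r; ring
    rw [heq s hs, hintegrand, integral_add ((hXΨs.const_mul _).sub (hXs.const_mul _))
      intervalIntegrable_const, integral_sub (hXΨs.const_mul _) (hXs.const_mul _),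
      intervalIntegral.integral_const_mul, intervalIntegral.integral_const_mul,
      intervalIntegral.integral_const, smul_eq_mul]
    ring
  have hdrift : ContinuousOn (fun s => x + ℓ * s) (Icc 0 t) := by fun_prop
  have hdriftw : ContinuousOn (fun s => x + ℓ * s + w s) (Icc 0 t) := hdrift.add hw
  have hcΦ : ContinuousOn (fun s => (μ - θ) * ∫ r in (0:ℝ)..s, (X r - Ψ r)) (Icc 0 t) :=
    continuousOn_const.mul hΦ
  rw [eq_linearSolution_of_eq_sub_integral
      (g := fun s => x + ℓ * s + w s + (μ - θ) * ∫ r in (0:ℝ)..s, (X r - Ψ r))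
      hX (hdriftw.add hcΦ) ht hsol,
    linearSolution_add hdriftw hcΦ ht, linearSolution_add hdrift hw ht, linearSolution_const_mul]

lemma linearSolution_primitive_nonneg {μ t : ℝ} {Z : ℝ → ℝ} (hμ : 0 ≤ μ) (ht : 0 ≤ t)
    (hZ : IntervalIntegrable Z volume 0 t) (hnn : ∀ u ∈ Icc 0 t, 0 ≤ Z u) :
    0 ≤ linearSolution μ (fun r => ∫ u in (0:ℝ)..r, Z u) t :=
  linearSolution_nonneg hμ (continuousOn_primitive_Icc_zero hZ ht) ht
    (fun _ => primitive_mono_of_nonneg hZ hnn) (integral_nonneg ht hnn)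

lemma sum_linearSolution_primitive_le {ι : Type*} [Fintype ι] {μ : ι → ℝ} {Z a : ι → ℝ → ℝ}
    {t : ℝ} (ht : 0 ≤ t) (hZ : ∀ i, IntervalIntegrable (Z i) volume 0 t)
    (ha : ∀ i, ContinuousOn (a i) (Icc 0 t))
    (hle : ∀ s ∈ Icc 0 t, ∑ i, Z i s ≤
      ∑ i, (a i s + μ i * linearSolution (μ i) (fun r => ∫ u in (0:ℝ)..r, Z i u) s)) :
    ∑ i, linearSolution (μ i) (fun r => ∫ u in (0:ℝ)..r, Z i u) t ≤
      ∑ i, ∫ s in (0:ℝ)..t, a i s := by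
  set η := fun i => linearSolution (μ i) (fun r => ∫ u in (0:ℝ)..r, Z i u)
  have hΦ := fun i => continuousOn_primitive_Icc_zero (hZ i) ht
  have hη : ∀ i, IntervalIntegrable (η i) volume 0 t := fun i =>
    (continuousOn_linearSolution (hΦ i) ht).intervalIntegrable_of_Icc ht
  have haη : ∀ i, IntervalIntegrable (fun s => a i s + μ i * η i s) volume 0 t := fun i =>
    ((ha i).intervalIntegrable_of_Icc ht).add ((hη i).const_mul _)
  have hint := integral_mono_on ht
    (by simpa only [Finset.sum_fn] using IntervalIntegrable.sum Finset.univ fun i _ => hZ i)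
    (by simpa only [Finset.sum_fn] using IntervalIntegrable.sum Finset.univ fun i _ => haη i) hle
  rw [integral_finsetSum (fun i _ => hZ i), integral_finsetSum (fun i _ => haη i)] at hint
  have hterm : ∀ i, ∫ s in (0:ℝ)..t, (a i s + μ i * η i s) =
      (∫ s in (0:ℝ)..t, a i s) + ((∫ u in (0:ℝ)..t, Z i u) - η i t) := fun i => by
    rw [integral_add ((ha i).intervalIntegrable_of_Icc ht) ((hη i).const_mul _),
      intervalIntegral.integral_const_mul, mul_integral_linearSolution (hΦ i) ht]
  simp only [hterm, Finset.sum_add_distrib, Finset.sum_sub_distrib] at hint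
  linarith

lemma sum_abs_le_of_workConserving {ι : Type*} [Fintype ι] {μ θ : ι → ℝ}
    (hμ : ∀ i, 0 ≤ μ i) (hθ : ∀ i, 0 ≤ θ i) {X Ψ : ℝ → ι → ℝ} {A a : ι → ℝ → ℝ} {t : ℝ}
    (ht : 0 ≤ t) (hX : ∀ i, ContinuousOn (fun s => X s i) (Icc 0 t))
    (hΨ : ∀ i, IntervalIntegrable (fun s => Ψ s i) volume 0 t)
    (hΨX : ∀ s ∈ Icc 0 t, ∀ i, Ψ s i ≤ X s i)
    (hΨsum : ∀ s ∈ Icc 0 t, ∑ i, Ψ s i = min 0 (∑ i, X s i))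
    (hdecomp : ∀ s ∈ Icc 0 t, ∀ i, X s i = A i s + (μ i - θ i) *
      linearSolution (μ i) (fun r => ∫ u in (0:ℝ)..r, (X u i - Ψ u i)) s)
    (hA : ∀ s ∈ Icc 0 t, ∀ i, |A i s| ≤ a i s) (ha : ∀ i, ContinuousOn (a i) (Icc 0 t)) :
    ∑ i, |X t i| ≤ ∑ i, (a i t + (∑ j, |μ j - θ j|) * ∫ s in (0:ℝ)..t, a i s) := by
  set D := ∑ j, |μ j - θ j|
  set η := fun i => linearSolution (μ i) (fun r => ∫ u in (0:ℝ)..r, (X u i - Ψ u i))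
  have hZ : ∀ i, IntervalIntegrable (fun s => X s i - Ψ s i) volume 0 t := fun i =>
    ((hX i).intervalIntegrable_of_Icc ht).sub (hΨ i)
  have hη : ∀ s ∈ Icc 0 t, ∀ i, 0 ≤ η i s := fun s hs i =>
    linearSolution_primitive_nonneg (hμ i) hs.1
      ((hZ i).mono_set (uIcc_subset_uIcc_left (by simpa [uIcc_of_le ht] using hs)))
      fun u hu => sub_nonneg.2 (hΨX u ⟨hu.1, hu.2.trans hs.2⟩ i)
  have hwork : ∀ s ∈ Icc 0 t, ∑ i, (X s i - Ψ s i) ≤ ∑ i, (a i s + μ i * η i s) := by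
    intro s hs
    have hle : ∀ i, X s i ≤ a i s + μ i * η i s := fun i => by
      rw [hdecomp s hs i]
      nlinarith [hη s hs i, hA s hs i, hθ i, le_abs_self (A i s)]
    rw [Finset.sum_sub_distrib, hΨsum s hs]
    rcases le_total 0 (∑ i, X s i) with h | h
    · rw [min_eq_left h, sub_zero]
      exact Finset.sum_le_sum fun i _ => hle i
    · rw [min_eq_right h, sub_self]
      exact Finset.sum_nonneg fun i _ =>
        add_nonneg ((abs_nonneg _).trans (hA s hs i)) (mul_nonneg (hμ i) (hη s hs i))
  have hcomp := sum_linearSolution_primitive_le (Z := fun i s => X s i - Ψ s i) ht hZ ha hwork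
  have hXt : ∀ i, |X t i| ≤ a i t + D * η i t := fun i => by
    have hD : |μ i - θ i| ≤ D :=
      Finset.single_le_sum (f := fun j => |μ j - θ j|) (fun j _ => abs_nonneg _) (Finset.mem_univ i)
    rw [hdecomp t ⟨ht, le_rfl⟩ i]
    refine (abs_add_le _ _).trans (add_le_add (hA t ⟨ht, le_rfl⟩ i) ?_)
    rw [abs_mul, abs_of_nonneg (hη t ⟨ht, le_rfl⟩ i)]
    exact mul_le_mul_of_nonneg_right hD (hη t ⟨ht, le_rfl⟩ i)
  calc ∑ i, |X t i| ≤ ∑ i, (a i t + D * η i t) := Finset.sum_le_sum fun i _ => hXt i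
    _ = ∑ i, a i t + D * ∑ i, η i t := by rw [Finset.sum_add_distrib, Finset.mul_sum]
    _ ≤ ∑ i, a i t + D * ∑ i, ∫ s in (0:ℝ)..t, a i s := by gcongr
    _ = ∑ i, (a i t + D * ∫ s in (0:ℝ)..t, a i s) := by
      rw [Finset.sum_add_distrib, Finset.mul_sum]

noncomputable def comparisonBound (μ x ℓ : ℝ) (w : ℝ → ℝ) (s : ℝ) : ℝ :=
  linearSolution μ (fun r => |x| + |ℓ| * r) s + |w s| + μ * ∫ r in (0:ℝ)..s, |w r|

section

variable {μ x ℓ t : ℝ} {w : ℝ → ℝ}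

lemma abs_linearSolution_le_comparisonBound (hμ : 0 ≤ μ) (hw : ContinuousOn w (Icc 0 t))
    (ht : 0 ≤ t) :
    |linearSolution μ (fun s => x + ℓ * s) t + linearSolution μ w t| ≤
      comparisonBound μ x ℓ w t := by
  have h1 := abs_linearSolution_affine_le hμ x ℓ ht
  have h2 := abs_linearSolution_le hμ hw ht
  have h3 := abs_add_le (linearSolution μ (fun s => x + ℓ * s) t) (linearSolution μ w t)
  rw [comparisonBound]
  linarith

lemma continuousOn_comparisonBound (hw : ContinuousOn w (Icc 0 t)) (ht : 0 ≤ t) :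
    ContinuousOn (comparisonBound μ x ℓ w) (Icc 0 t) :=
  ((continuousOn_linearSolution (by fun_prop) ht).add hw.abs).add
    (continuousOn_const.mul
      (continuousOn_primitive_Icc_zero (hw.abs.intervalIntegrable_of_Icc ht) ht))

lemma comparisonBound_le (hμ : 0 ≤ μ) (ht : 0 ≤ t) :
    comparisonBound μ x ℓ w t ≤ |x| + |ℓ| * t + |w t| + μ * ∫ s in (0:ℝ)..t, |w s| := by
  have := linearSolution_le_self (f := fun r => |x| + |ℓ| * r) hμ ht
    fun s hs => by have := hs.1; positivity
  rw [comparisonBound]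
  linarith

lemma integral_comparisonBound_le (hμ : 0 < μ) (hw : ContinuousOn w (Icc 0 t)) (ht : 0 ≤ t) :
    ∫ s in (0:ℝ)..t, comparisonBound μ x ℓ w s ≤
      (|x| + |ℓ| * t) / μ + (∫ s in (0:ℝ)..t, |w s|) +
        μ * ∫ s in (0:ℝ)..t, ∫ r in (0:ℝ)..s, |w r| := by
  have hp : ContinuousOn (fun r => |x| + |ℓ| * r) (Icc 0 t) := by fun_prop
  have hprim := continuousOn_primitive_Icc_zero (hw.abs.intervalIntegrable_of_Icc ht) ht
  have hRp : μ * ∫ s in (0:ℝ)..t, linearSolution μ (fun r => |x| + |ℓ| * r) s ≤ |x| + |ℓ| * t := by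
    rw [mul_integral_linearSolution hp ht, sub_le_self_iff]
    exact linearSolution_nonneg hμ.le hp ht
      (fun s hs => by gcongr; exact hs.2) (by positivity)
  have hI1 : IntervalIntegrable (fun s => linearSolution μ (fun r => |x| + |ℓ| * r) s) volume 0 t :=
    (continuousOn_linearSolution hp ht).intervalIntegrable_of_Icc ht
  have hI2 : IntervalIntegrable (fun s => |w s|) volume 0 t := hw.abs.intervalIntegrable_of_Icc ht
  have hI3 : IntervalIntegrable (fun s => μ * ∫ r in (0:ℝ)..s, |w r|) volume 0 t :=
    (continuousOn_const.mul hprim).intervalIntegrable_of_Icc ht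
  simp only [comparisonBound]
  rw [integral_add (hI1.add hI2) hI3, integral_add hI1 hI2, intervalIntegral.integral_const_mul]
  gcongr
  rwa [le_div_iff₀ hμ, mul_comm]

lemma comparisonBound_add_mul_integral_le (hμ : 0 < μ) {κ D : ℝ} (hκ : μ + μ⁻¹ ≤ κ)
    (hD : 0 ≤ D) (hw : ContinuousOn w (Icc 0 t)) (ht : 0 ≤ t) :
    comparisonBound μ x ℓ w t + D * ∫ s in (0:ℝ)..t, comparisonBound μ x ℓ w s ≤
      (1 + D) * (1 + κ) * (|x| + |ℓ| * t + |w t| + (∫ s in (0:ℝ)..t, |w s|) +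
        ∫ s in (0:ℝ)..t, ∫ r in (0:ℝ)..s, |w r|) := by
  set u := |x| + |ℓ| * t
  set p := ∫ s in (0:ℝ)..t, |w s|
  set q := ∫ s in (0:ℝ)..t, ∫ r in (0:ℝ)..s, |w r|
  have hu : 0 ≤ u := by positivity
  have hp : 0 ≤ p := integral_nonneg ht fun s _ => abs_nonneg _
  have hq : 0 ≤ q := integral_nonneg ht fun s hs => integral_nonneg hs.1 fun r _ => abs_nonneg _
  have hv := abs_nonneg (w t)
  have hK : 1 ≤ 1 + κ := by linarith [inv_pos.2 hμ]
  have hμK : μ ≤ 1 + κ := by linarith [inv_pos.2 hμ]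
  have hμK' : μ⁻¹ ≤ 1 + κ := by linarith
  have hb : comparisonBound μ x ℓ w t ≤ (1 + κ) * (u + |w t| + p + q) := by
    nlinarith [comparisonBound_le (x := x) (ℓ := ℓ) (w := w) hμ.le ht,
      mul_le_mul_of_nonneg_right hK hu, mul_le_mul_of_nonneg_right hK hv,
      mul_le_mul_of_nonneg_right hμK hp]
  have hI : ∫ s in (0:ℝ)..t, comparisonBound μ x ℓ w s ≤ (1 + κ) * (u + |w t| + p + q) := by
    have h := integral_comparisonBound_le (x := x) (ℓ := ℓ) hμ hw ht
    rw [div_eq_mul_inv] at h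
    nlinarith [mul_le_mul_of_nonneg_left hμK' hu, mul_le_mul_of_nonneg_right hK hp,
      mul_le_mul_of_nonneg_right hμK hq]
  nlinarith [mul_le_mul_of_nonneg_left hI hD]
end

lemma sum_integral_primitive {ι : Type*} [Fintype ι] {f : ι → ℝ → ℝ} {t : ℝ}
    (hf : ∀ i, ContinuousOn (f i) (Icc 0 t)) (ht : 0 ≤ t) :
    ∑ i, ∫ s in (0:ℝ)..t, ∫ r in (0:ℝ)..s, f i r =
      ∫ s in (0:ℝ)..t, ∫ r in (0:ℝ)..s, ∑ i, f i r := by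
  rw [← integral_finsetSum fun i _ => (continuousOn_primitive_Icc_zero
    ((hf i).intervalIntegrable_of_Icc ht) ht).intervalIntegrable_of_Icc ht]
  refine integral_congr fun s hs => ?_
  rw [uIcc_of_le ht] at hs
  exact (integral_finsetSum fun i _ =>
    ((hf i).mono (Icc_subset_Icc_right hs.2)).intervalIntegrable_of_Icc hs.1).symm

lemma sum_coordinate_bound_le {k : ℕ} {x ℓ : Fin k → ℝ} {w : ℝ → Fin k → ℝ} {t K : ℝ}
    (hK : 0 ≤ K) (ht : 0 ≤ t) (hw : ∀ i, ContinuousOn (fun s => w s i) (Icc 0 t)) :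
    ∑ i, K * (|x i| + |ℓ i| * t + |w t i| + (∫ s in (0:ℝ)..t, |w s i|) +
        ∫ s in (0:ℝ)..t, ∫ r in (0:ℝ)..s, |w r i|) ≤
      K * (1 + ∑ i, |ℓ i|) * (1 + t ^ 2 + l1 x + l1 (w t) + (∫ s in (0:ℝ)..t, l1 (w s)) +
        ∫ s in (0:ℝ)..t, ∫ r in (0:ℝ)..s, l1 (w r)) := by
  have hI : ∫ s in (0:ℝ)..t, l1 (w s) = ∑ i, ∫ s in (0:ℝ)..t, |w s i| :=
    integral_finsetSum fun i _ => (hw i).abs.intervalIntegrable_of_Icc ht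
  have hII : ∫ s in (0:ℝ)..t, ∫ r in (0:ℝ)..s, l1 (w r) =
      ∑ i, ∫ s in (0:ℝ)..t, ∫ r in (0:ℝ)..s, |w r i| :=
    (sum_integral_primitive (fun i => (hw i).abs) ht).symm
  have hl1 : ∀ v : Fin k → ℝ, 0 ≤ l1 v := fun v => Finset.sum_nonneg fun i _ => abs_nonneg _
  have hI0 : 0 ≤ ∫ s in (0:ℝ)..t, l1 (w s) := integral_nonneg ht fun s _ => hl1 _
  have hII0 : 0 ≤ ∫ s in (0:ℝ)..t, ∫ r in (0:ℝ)..s, l1 (w r) :=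
    integral_nonneg ht fun s hs => integral_nonneg hs.1 fun r _ => hl1 _
  have hΛ : 0 ≤ ∑ i, |ℓ i| := Finset.sum_nonneg fun i _ => abs_nonneg _
  have ht2 : t ≤ 1 + t ^ 2 := by nlinarith [sq_nonneg (t - 1)]
  calc ∑ i, K * (|x i| + |ℓ i| * t + |w t i| + (∫ s in (0:ℝ)..t, |w s i|) +
        ∫ s in (0:ℝ)..t, ∫ r in (0:ℝ)..s, |w r i|)
      = K * (l1 x + (∑ i, |ℓ i|) * t + l1 (w t) + (∫ s in (0:ℝ)..t, l1 (w s)) +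
          ∫ s in (0:ℝ)..t, ∫ r in (0:ℝ)..s, l1 (w r)) := by
        rw [hI, hII]
        simp only [l1, ← Finset.mul_sum, Finset.sum_add_distrib, Finset.sum_mul]
    _ ≤ _ := by
      rw [mul_assoc K]
      refine mul_le_mul_of_nonneg_left ?_ hK
      nlinarith [hl1 x, hl1 (w t), mul_le_mul_of_nonneg_left ht2 hΛ]

theorem stmt_18_general {k : ℕ} (ℓ μ θ : Fin k → ℝ)
    (hμ : ∀ i, 0 < μ i) (hθ : ∀ i, 0 ≤ θ i) :
    ∃ c > (0:ℝ),
      ∀ (x : Fin k → ℝ) (w : ℝ → Fin k → ℝ), ContinuousOn w (Ici 0) → w 0 = 0 →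
      ∀ (X Ψ : ℝ → Fin k → ℝ), ContinuousOn X (Ici 0) →
        (∀ i, ∀ t : ℝ, IntervalIntegrable (fun s => Ψ s i) volume 0 t) →
        (∀ t ≥ (0:ℝ), ∀ i, Ψ t i ≤ X t i) →
        (∀ t ≥ (0:ℝ), ∑ i, Ψ t i = min 0 (∑ i, X t i)) →
        (∀ t ≥ (0:ℝ), ∀ i, X t i = x i + w t i +
          ∫ s in (0:ℝ)..t, (-θ i * X s i - (μ i - θ i) * Ψ s i + ℓ i)) →
      ∀ t ≥ (0:ℝ),
        l1 (X t) ≤ c * (1 + t ^ 2 + l1 x + l1 (w t) +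
          (∫ s in (0:ℝ)..t, l1 (w s)) +
          ∫ s in (0:ℝ)..t, ∫ r in (0:ℝ)..s, l1 (w r)) := by
  set D := ∑ i, |μ i - θ i|
  set κ := ∑ i, (μ i + (μ i)⁻¹)
  have hκ : ∀ i, μ i + (μ i)⁻¹ ≤ κ := fun i =>
    Finset.single_le_sum (f := fun j => μ j + (μ j)⁻¹)
      (fun j _ => by have := hμ j; positivity) (Finset.mem_univ i)
  have hκ0 : 0 ≤ κ := Finset.sum_nonneg fun j _ => by have := hμ j; positivity
  have hD : 0 ≤ D := Finset.sum_nonneg fun j _ => abs_nonneg _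
  refine ⟨(1 + D) * (1 + κ) * (1 + ∑ i, |ℓ i|), by positivity, ?_⟩
  intro x w hw _ X Ψ hX hΨ hΨX hΨsum heq t ht
  have hwi : ∀ i, ContinuousOn (fun s => w s i) (Icc 0 t) := fun i =>
    ((continuous_apply i).comp_continuousOn hw).mono Icc_subset_Ici_self
  have hXi : ∀ i, ContinuousOn (fun s => X s i) (Icc 0 t) := fun i =>
    ((continuous_apply i).comp_continuousOn hX).mono Icc_subset_Ici_self
  calc l1 (X t) ≤ ∑ i, (comparisonBound (μ i) (x i) (ℓ i) (fun s => w s i) t +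
        D * ∫ s in (0:ℝ)..t, comparisonBound (μ i) (x i) (ℓ i) (fun s => w s i) s) :=
      sum_abs_le_of_workConserving (fun i => (hμ i).le) hθ ht hXi (fun i => hΨ i t)
        (fun s hs => hΨX s hs.1) (fun s hs => hΨsum s hs.1)
        (fun s hs i => eq_linearSolution_of_integral_equation
          ((hXi i).mono (Icc_subset_Icc_right hs.2)) ((hwi i).mono (Icc_subset_Icc_right hs.2))
          (hΨ i s) hs.1 fun r hr => heq r hr.1 i)
        (fun s hs i => abs_linearSolution_le_comparisonBound (hμ i).le
          ((hwi i).mono (Icc_subset_Icc_right hs.2)) hs.1)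
        (fun i => continuousOn_comparisonBound (hwi i) ht)
    _ ≤ ∑ i, (1 + D) * (1 + κ) * (|x i| + |ℓ i| * t + |w t i| + (∫ s in (0:ℝ)..t, |w s i|) +
          ∫ s in (0:ℝ)..t, ∫ r in (0:ℝ)..s, |w r i|) :=
      Finset.sum_le_sum fun i _ => comparisonBound_add_mul_integral_le (hμ i) (hκ i) hD (hwi i) ht
    _ ≤ _ := sum_coordinate_bound_le (by positivity) ht hwi

theorem stmt_18 {k : ℕ} (hk : 1 ≤ k) (ℓ μ θ : Fin k → ℝ)
    (hμ : ∀ i, 0 < μ i) (hθ : ∀ i, 0 ≤ θ i) :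
    ∃ c > (0:ℝ),
      ∀ (x : Fin k → ℝ) (w : ℝ → Fin k → ℝ), ContinuousOn w (Ici 0) → w 0 = 0 →
      ∀ (X Ψ : ℝ → Fin k → ℝ), ContinuousOn X (Ici 0) →
        (∀ i, ∀ t : ℝ, IntervalIntegrable (fun s => Ψ s i) volume 0 t) →
        (∀ t ≥ (0:ℝ), ∀ i, Ψ t i ≤ X t i) →
        (∀ t ≥ (0:ℝ), ∑ i, Ψ t i = min 0 (∑ i, X t i)) →
        (∀ t ≥ (0:ℝ), ∀ i, X t i = x i + w t i +
          ∫ s in (0:ℝ)..t, (-θ i * X s i - (μ i - θ i) * Ψ s i + ℓ i)) →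
      ∀ t ≥ (0:ℝ),
        l1 (X t) ≤ c * (1 + t ^ 2 + l1 x + l1 (w t) +
          (∫ s in (0:ℝ)..t, l1 (w s)) +
          ∫ s in (0:ℝ)..t, ∫ r in (0:ℝ)..s, l1 (w r)) :=
  stmt_18_general ℓ μ θ hμ hθ
end
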